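/- Given finite input and output alphabets 𝒳, 𝒴, for every P_e > 0, δ > 0, every probability distribution Q on 𝒳, and every rate R > 0, there exists n large enough and a randomized block encoder-decoder pair of rate R over block size n (common randomness S, encoder φ: {1,…,⌈exp(nR)⌉} × 𝒮 → 𝒳^n, decoder φ̄: 𝒴^n × 𝒮 → {1,…,⌈exp(nR)⌉}) such that: (i) for every message w, the channel input sequence φ(w,S) is distributed Q^n (i.i.d. according to Q); and (ii) for every message w, every input sequence x ∈ 𝒳^n and every output sequence y ∈ 𝒴^n with Î(x;y) > R + δ, the error probability P_e^(w)(x,y) = Pr( φ̄(y,S) ≠ w | φ(w,S) = x ) is at most P_e (with P_e^(w)(x,y) defined as 0 when the conditioning event has probability zero). -/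

import Mathlib

/-!
Random coding with a threshold decoder. The codebook consists of `⌈exp(nR)⌉` codewords drawn
i.i.d. from `Qⁿ`, message `w` is sent as its codeword, and the decoder outputs a message whose
codeword `c` satisfies `Î(c;y) > R + δ`. If the codeword of `w` is `x` with `Î(x;y) > R + δ`, an
error requires some other, independent, codeword to pass the test, so by the union bound the
conditional error probability is at most `⌈exp(nR)⌉ · Qⁿ{c : Î(c;y) > R + δ}`.

By the method of types, `Qⁿ(c) · exp(n Î(c;y)) ≤ ∏ᵢ N(cᵢ,yᵢ) / N(yᵢ)` (the empirical
distribution of `c` maximises the likelihood), and the right-hand side sums to at most 1 over each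
joint type class, hence to at most `(n+1)^(|𝒳||𝒴|)` over all `c`. Thus
`Qⁿ{Î(c;y) > t} ≤ (n+1)^(|𝒳||𝒴|) exp(-nt)`, and the error probability is at most
`2 (n+1)^(|𝒳||𝒴|) exp(-nδ)`, which tends to 0.
-/

open Finset MeasureTheory

/-- Joint empirical distribution of two sequences over an index set `A`. -/
noncomputable def empDistOn {n : ℕ} {𝒳 𝒴 : Type*} [DecidableEq 𝒳] [DecidableEq 𝒴]
    (A : Finset (Fin n)) (x : Fin n → 𝒳) (y : Fin n → 𝒴) (a : 𝒳) (b : 𝒴) : ℝ :=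
  ((A.filter fun i => x i = a ∧ y i = b).card : ℝ) / (A.card : ℝ)

/-- Mutual information of a joint distribution `p` on a finite product alphabet
(natural-log base). -/
noncomputable def miOf {𝒳 𝒴 : Type*} [Fintype 𝒳] [Fintype 𝒴] (p : 𝒳 → 𝒴 → ℝ) : ℝ :=
  ∑ a, ∑ b, p a b * Real.log (p a b / ((∑ b', p a b') * (∑ a', p a' b)))

/-- Empirical mutual information `Î(x;y)` of two sequences. -/
noncomputable def empMI {n : ℕ} {𝒳 𝒴 : Type*} [Fintype 𝒳] [Fintype 𝒴]
    [DecidableEq 𝒳] [DecidableEq 𝒴] (x : Fin n → 𝒳) (y : Fin n → 𝒴) : ℝ :=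
  miOf (empDistOn Finset.univ x y)

open scoped ENNReal
open Filter Topology

section EmpiricalCounts

variable {n : ℕ} {α β : Type*} [DecidableEq α] [DecidableEq β]

def letterCount (x : Fin n → α) (a : α) : ℕ := #{i | x i = a}

def jointCount (x : Fin n → α) (y : Fin n → β) (a : α) (b : β) : ℕ := #{i | x i = a ∧ y i = b}

lemma letterCount_pos (x : Fin n → α) (i : Fin n) : 0 < letterCount x (x i) :=
  card_pos.mpr ⟨i, by simp⟩

lemma jointCount_pos (x : Fin n → α) (y : Fin n → β) (i : Fin n) :
    0 < jointCount x y (x i) (y i) :=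
  card_pos.mpr ⟨i, by simp⟩

lemma jointCount_le (x : Fin n → α) (y : Fin n → β) (a : α) (b : β) : jointCount x y a b ≤ n :=
  (card_filter_le _ _).trans_eq (card_fin n)

lemma letterCount_pair (x : Fin n → α) (y : Fin n → β) (a : α) (b : β) :
    letterCount (fun i => (x i, y i)) (a, b) = jointCount x y a b := by
  simp [letterCount, jointCount]

lemma sum_jointCount_left [Fintype α] (x : Fin n → α) (y : Fin n → β) (b : β) :
    ∑ a, jointCount x y a b = letterCount y b := by
  rw [letterCount, card_eq_sum_card_fiberwise fun i _ => mem_univ (x i)]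
  refine sum_congr rfl fun a _ => ?_
  rw [jointCount, filter_filter]
  simp_rw [and_comm]

lemma sum_jointCount_right [Fintype β] (x : Fin n → α) (y : Fin n → β) (a : α) :
    ∑ b, jointCount x y a b = letterCount x a := by
  rw [letterCount, card_eq_sum_card_fiberwise fun i _ => mem_univ (y i)]
  refine sum_congr rfl fun b _ => ?_
  rw [jointCount, filter_filter]

lemma sum_comp_eq_sum_letterCount_smul [Fintype α] {M : Type*} [AddCommMonoid M]
    (x : Fin n → α) (f : α → M) : ∑ i, f (x i) = ∑ a, letterCount x a • f a := by
  rw [← sum_fiberwise univ x]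
  refine sum_congr rfl fun a _ => ?_
  rw [letterCount, ← sum_const]
  exact sum_congr rfl fun i hi => by rw [(mem_filter.mp hi).2]

end EmpiricalCounts

section EmpiricalMutualInformation

variable {n : ℕ} {𝒳 𝒴 : Type*} [Fintype 𝒳] [Fintype 𝒴] [DecidableEq 𝒳] [DecidableEq 𝒴]

lemma mul_empMI_eq_sum_log (x : Fin n → 𝒳) (y : Fin n → 𝒴) :
    n * empMI x y = ∑ i, Real.log (jointCount x y (x i) (y i) * n /
      (letterCount x (x i) * letterCount y (y i))) := by
  have hp : empDistOn univ x y = fun a b => (jointCount x y a b : ℝ) / n := by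
    ext a b; simp [empDistOn, jointCount]
  have hpx : ∀ a, ∑ b, (jointCount x y a b : ℝ) / n = letterCount x a / n := fun a => by
    rw [← sum_div, ← sum_jointCount_right x y a, Nat.cast_sum]
  have hpy : ∀ b, ∑ a, (jointCount x y a b : ℝ) / n = letterCount y b / n := fun b => by
    rw [← sum_div, ← sum_jointCount_left x y b, Nat.cast_sum]
  rw [sum_comp_eq_sum_letterCount_smul (fun i => (x i, y i))
    (fun p => Real.log (jointCount x y p.1 p.2 * n / (letterCount x p.1 * letterCount y p.2))),
    Fintype.sum_prod_type, empMI, miOf, hp, mul_sum]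
  simp only [hpx, hpy, letterCount_pair, mul_sum, nsmul_eq_mul]
  refine sum_congr rfl fun a _ => sum_congr rfl fun b _ => ?_
  rcases (jointCount x y a b).eq_zero_or_pos with h0 | hpos
  · simp [h0]
  have hn : (n : ℝ) ≠ 0 := by have := hpos.trans_le (jointCount_le x y a b); positivity
  rw [← mul_assoc, mul_div_cancel₀ _ hn]
  congr 2
  field_simp

end EmpiricalMutualInformation

section Gibbs

lemma prod_le_one_of_sum_le_card {ι : Type*} (s : Finset ι) {z : ι → ℝ} (hz : ∀ i ∈ s, 0 ≤ z i)
    (hsum : ∑ i ∈ s, z i ≤ #s) : ∏ i ∈ s, z i ≤ 1 := by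
  rcases s.eq_empty_or_nonempty with rfl | hs
  · simp
  have hcard : (0 : ℝ) < #s := by exact_mod_cast hs.card_pos
  have amgm := Real.geom_mean_le_arith_mean s (fun _ => 1) z (by simp) (by simpa using hcard) hz
  simp only [Real.rpow_one, one_mul, sum_const, nsmul_eq_mul, mul_one] at amgm
  have := amgm.trans ((div_le_one hcard).mpr hsum)
  rwa [Real.rpow_inv_le_iff_of_pos (prod_nonneg hz) zero_le_one hcard, Real.one_rpow] at this

variable {n : ℕ} {𝒳 : Type*} [Fintype 𝒳] [DecidableEq 𝒳] {Q : 𝒳 → ℝ}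

lemma prod_le_prod_letterCount_div (hQ0 : ∀ a, 0 ≤ Q a) (hQ1 : ∑ a, Q a = 1) (x : Fin n → 𝒳) :
    ∏ i, Q (x i) ≤ ∏ i, (letterCount x (x i) : ℝ) / n := by
  set z : Fin n → ℝ := fun i => n * Q (x i) / letterCount x (x i)
  have hfactor : ∀ i, Q (x i) = letterCount x (x i) / n * z i := fun i => by
    have : (n : ℝ) ≠ 0 := by have := i.pos; positivity
    have : (letterCount x (x i) : ℝ) ≠ 0 := by have := letterCount_pos x i; positivity
    simp only [z]; field_simp
  have hterm : ∀ a, letterCount x a • (n * Q a / letterCount x a) ≤ n * Q a := fun a => by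
    rw [nsmul_eq_mul]
    rcases (letterCount x a).eq_zero_or_pos with h0 | hpos
    · simp only [h0, Nat.cast_zero, zero_mul]; have := hQ0 a; positivity
    · rw [mul_div_cancel₀ _ (by positivity)]
  have hz_sum : ∑ i, z i ≤ #(univ : Finset (Fin n)) := calc
    ∑ i, z i = ∑ a, letterCount x a • (n * Q a / letterCount x a) :=
      sum_comp_eq_sum_letterCount_smul x fun a => n * Q a / letterCount x a
    _ ≤ ∑ a, n * Q a := sum_le_sum fun a _ => hterm a
    _ = #(univ : Finset (Fin n)) := by rw [← mul_sum, hQ1, mul_one, card_univ, Fintype.card_fin]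
  calc ∏ i, Q (x i) = (∏ i, (letterCount x (x i) : ℝ) / n) * ∏ i, z i := by
        rw [← prod_mul_distrib]; exact prod_congr rfl fun i _ => hfactor i
    _ ≤ (∏ i, (letterCount x (x i) : ℝ) / n) * 1 := by
        gcongr
        exact prod_le_one_of_sum_le_card _ (fun i _ => by have := hQ0 (x i); positivity) hz_sum
    _ = ∏ i, (letterCount x (x i) : ℝ) / n := mul_one _

end Gibbs

section TypeCounting

variable {n : ℕ} {𝒳 𝒴 : Type*} [Fintype 𝒳] [Fintype 𝒴] [DecidableEq 𝒳] [DecidableEq 𝒴]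

lemma prod_mul_exp_mul_empMI_le {Q : 𝒳 → ℝ} (hQ0 : ∀ a, 0 ≤ Q a) (hQ1 : ∑ a, Q a = 1)
    (x : Fin n → 𝒳) (y : Fin n → 𝒴) :
    (∏ i, Q (x i)) * Real.exp (n * empMI x y) ≤
      ∏ i, (jointCount x y (x i) (y i) : ℝ) / letterCount y (y i) := by
  have hpos : ∀ i, (0 : ℝ) < n ∧ (0 : ℝ) < letterCount x (x i) ∧ (0 : ℝ) < letterCount y (y i) ∧
      (0 : ℝ) < jointCount x y (x i) (y i) := fun i => by
    refine ⟨?_, ?_, ?_, ?_⟩ <;> norm_cast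
    exacts [i.pos, letterCount_pos x i, letterCount_pos y i, jointCount_pos x y i]
  have hexp : Real.exp (n * empMI x y) = ∏ i, (jointCount x y (x i) (y i) * n /
      (letterCount x (x i) * letterCount y (y i)) : ℝ) := by
    rw [mul_empMI_eq_sum_log, Real.exp_sum]
    refine prod_congr rfl fun i _ => Real.exp_log ?_
    obtain ⟨h₁, h₂, h₃, h₄⟩ := hpos i
    positivity
  calc (∏ i, Q (x i)) * Real.exp (n * empMI x y)
      ≤ (∏ i, (letterCount x (x i) : ℝ) / n) * Real.exp (n * empMI x y) :=
        mul_le_mul_of_nonneg_right (prod_le_prod_letterCount_div hQ0 hQ1 x) (Real.exp_pos _).le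
    _ = ∏ i, (jointCount x y (x i) (y i) : ℝ) / letterCount y (y i) := by
        rw [hexp, ← prod_mul_distrib]
        refine prod_congr rfl fun i _ => ?_
        obtain ⟨h₁, h₂, h₃, -⟩ := hpos i
        field_simp

lemma sum_fiber_prod_jointCount_div_le_one (y : Fin n → 𝒴) (V : 𝒳 → 𝒴 → ℕ) :
    ∑ x with jointCount x y = V, ∏ i, (jointCount x y (x i) (y i) : ℝ) / letterCount y (y i)
      ≤ 1 := by
  rcases Finset.eq_empty_or_nonempty {x | jointCount x y = V} with hempty | ⟨x₀, hx₀⟩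
  · simp [hempty]
  have hV : ∀ b, ∑ a, (V a b : ℝ) = letterCount y b := fun b => by
    rw [← (mem_filter.mp hx₀).2]; exact_mod_cast sum_jointCount_left x₀ y b
  -- on this fibre the summand is the likelihood of `x` under the stochastic matrix `V a b / N(b)`
  set f : Fin n → 𝒳 → ℝ := fun i a => (V a (y i) : ℝ) / letterCount y (y i)
  calc ∑ x with jointCount x y = V, ∏ i, (jointCount x y (x i) (y i) : ℝ) / letterCount y (y i)
      = ∑ x with jointCount x y = V, ∏ i, f i (x i) :=
        sum_congr rfl fun x hx => by rw [(mem_filter.mp hx).2]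
    _ ≤ ∑ x : Fin n → 𝒳, ∏ i, f i (x i) :=
        sum_le_sum_of_subset_of_nonneg (filter_subset _ _) fun _ _ _ => by positivity
    _ = ∏ i, ∑ a, f i a := (Fintype.prod_sum f).symm
    _ = 1 := prod_eq_one fun i _ => by
        have : (letterCount y (y i) : ℝ) ≠ 0 := by have := letterCount_pos y i; positivity
        rw [← sum_div, hV, div_self this]

lemma sum_prod_jointCount_div_le (y : Fin n → 𝒴) :
    ∑ x : Fin n → 𝒳, ∏ i, (jointCount x y (x i) (y i) : ℝ) / letterCount y (y i) ≤
      (n + 1) ^ (Fintype.card 𝒳 * Fintype.card 𝒴) := by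
  set types := Fintype.piFinset fun _ : 𝒳 => Fintype.piFinset fun _ : 𝒴 => range (n + 1)
  have hmaps : ∀ x ∈ (univ : Finset (Fin n → 𝒳)), jointCount x y ∈ types := fun x _ => by
    simp only [types, Fintype.mem_piFinset, mem_range]
    exact fun a b => Nat.lt_succ_of_le (jointCount_le x y a b)
  calc ∑ x : Fin n → 𝒳, ∏ i, (jointCount x y (x i) (y i) : ℝ) / letterCount y (y i)
      = ∑ V ∈ types, ∑ x with jointCount x y = V,
          ∏ i, (jointCount x y (x i) (y i) : ℝ) / letterCount y (y i) :=
        (sum_fiberwise_of_maps_to hmaps _).symm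
    _ ≤ ∑ V ∈ types, 1 := sum_le_sum fun V _ => sum_fiber_prod_jointCount_div_le_one y V
    _ = (n + 1) ^ (Fintype.card 𝒳 * Fintype.card 𝒴) := by
        simp [types, Fintype.card_piFinset, pow_mul']

lemma sum_prod_of_lt_empMI_le {Q : 𝒳 → ℝ} (hQ0 : ∀ a, 0 ≤ Q a) (hQ1 : ∑ a, Q a = 1)
    (y : Fin n → 𝒴) (t : ℝ) :
    ∑ x with t < empMI x y, ∏ i, Q (x i) ≤
      Real.exp (-(n * t)) * (n + 1) ^ (Fintype.card 𝒳 * Fintype.card 𝒴) := by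
  set G : (Fin n → 𝒳) → ℝ := fun x => ∏ i, (jointCount x y (x i) (y i) : ℝ) / letterCount y (y i)
  have hG : ∀ x, 0 ≤ G x := fun x => by positivity
  have htilt : ∀ x, t < empMI x y → ∏ i, Q (x i) ≤ Real.exp (-(n * t)) * G x := fun x hx => by
    rw [Real.exp_neg, ← div_eq_inv_mul, le_div_iff₀ (Real.exp_pos _)]
    refine le_trans ?_ (prod_mul_exp_mul_empMI_le hQ0 hQ1 x y)
    gcongr
    exact prod_nonneg fun i _ => hQ0 _
  calc ∑ x with t < empMI x y, ∏ i, Q (x i)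
      ≤ ∑ x with t < empMI x y, Real.exp (-(n * t)) * G x :=
        sum_le_sum fun x hx => htilt x (mem_filter.mp hx).2
    _ ≤ ∑ x, Real.exp (-(n * t)) * G x :=
        sum_le_sum_of_subset_of_nonneg (filter_subset _ _) fun x _ _ => by
          have := hG x; positivity
    _ ≤ Real.exp (-(n * t)) * (n + 1) ^ (Fintype.card 𝒳 * Fintype.card 𝒴) := by
        rw [← mul_sum]; gcongr; exact sum_prod_jointCount_div_le y

end TypeCounting

lemma exists_ceil_exp_mul_exp_mul_pow_le (K : ℕ) {R δ ε : ℝ} (hR : 0 ≤ R) (hδ : 0 < δ)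
    (hε : 0 < ε) : ∃ n : ℕ, 0 < n ∧
      ⌈Real.exp (n * R)⌉₊ * (Real.exp (-(n * (R + δ))) * (n + 1) ^ K) ≤ ε := by
  set r := Real.exp (-δ)
  have hr : |r| < 1 := by
    rw [abs_of_pos (Real.exp_pos _), Real.exp_lt_one_iff]; linarith
  have hlim : Tendsto (fun n : ℕ => 2 / r * (((n + 1 : ℕ) : ℝ) ^ K * r ^ (n + 1))) atTop (𝓝 0) := by
    simpa using ((tendsto_pow_const_mul_const_pow_of_abs_lt_one K hr).comp
      (tendsto_add_atTop_nat 1)).const_mul (2 / r)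
  obtain ⟨n, hn, hsmall⟩ := ((eventually_gt_atTop 0).and (hlim.eventually (gt_mem_nhds hε))).exists
  refine ⟨n, hn, ?_⟩
  have hceil : (⌈Real.exp (n * R)⌉₊ : ℝ) ≤ 2 * Real.exp (n * R) := by
    have : 1 ≤ Real.exp (n * R) := Real.one_le_exp (by positivity)
    linarith [Nat.ceil_lt_add_one (Real.exp_pos (n * R)).le]
  have hexp : Real.exp (n * R) * Real.exp (-(n * (R + δ))) = r⁻¹ * r ^ (n + 1) := by
    rw [← Real.exp_neg, ← Real.exp_nat_mul, ← Real.exp_add, ← Real.exp_add]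
    push_cast; ring_nf
  calc ⌈Real.exp (n * R)⌉₊ * (Real.exp (-(n * (R + δ))) * (n + 1) ^ K)
      ≤ 2 * Real.exp (n * R) * (Real.exp (-(n * (R + δ))) * (n + 1) ^ K) := by gcongr
    _ = 2 / r * (((n + 1 : ℕ) : ℝ) ^ K * r ^ (n + 1)) := by
        rw [div_eq_mul_inv, mul_assoc, ← mul_assoc (Real.exp _), hexp]; push_cast; ring
    _ ≤ ε := hsmall.le

section RandomCodebook

open Classical in
noncomputable def testDecode {α : Type*} {M : ℕ} (A : Set α) (d : Fin M) (s : Fin M → α) :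
    Fin M :=
  if h : ∃ u, s u ∈ A then h.choose else d

variable {α : Type*} {M : ℕ}

lemma testDecode_mem {A : Set α} {d : Fin M} {s : Fin M → α} {w : Fin M} (hw : s w ∈ A) :
    s (testDecode A d s) ∈ A := by
  have h : ∃ u, s u ∈ A := ⟨w, hw⟩
  rw [testDecode, dif_pos h]
  exact h.choose_spec

lemma testDecode_ne_inter_subset {A : Set α} (d w : Fin M) {x : α} (hx : x ∈ A) :
    {s | testDecode A d s ≠ w} ∩ {s | s w = x} ⊆
      ⋃ w' ∈ univ.erase w, {s | s w' ∈ A} ∩ {s | s w = x} := by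
  rintro s ⟨hne, hsw : s w = x⟩
  simp only [Set.mem_iUnion]
  exact ⟨_, mem_erase.mpr ⟨hne, mem_univ _⟩, testDecode_mem (hsw ▸ hx), hsw⟩

variable [MeasurableSpace α] [DiscreteMeasurableSpace α]

lemma measure_pi_eval_preimage (ν : Measure α) [IsProbabilityMeasure ν] (w : Fin M) (B : Set α) :
    Measure.pi (fun _ : Fin M => ν) {s | s w ∈ B} = ν B :=
  (measurePreserving_eval _ w).measure_preimage MeasurableSet.of_discrete.nullMeasurableSet

lemma measure_testDecode_ne_inter_le (ν : Measure α) [IsProbabilityMeasure ν] {A : Set α}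
    (d w : Fin M) {x : α} (hx : x ∈ A) :
    Measure.pi (fun _ : Fin M => ν) ({s | testDecode A d s ≠ w} ∩ {s | s w = x}) ≤
      M * (ν A * ν {x}) := by
  set μ := Measure.pi fun _ : Fin M => ν
  have hindep : ∀ w' ≠ w, μ ({s | s w' ∈ A} ∩ {s | s w = x}) = ν A * ν {x} := fun w' hw' => by
    have h := (ProbabilityTheory.iIndepFun_pi (μ := fun _ : Fin M => ν) (X := fun _ => id)
      fun _ => aemeasurable_id).indepFun hw'
    calc μ ({s | s w' ∈ A} ∩ {s | s w = x})
        = μ ((fun s => id (s w')) ⁻¹' A ∩ (fun s => id (s w)) ⁻¹' {x}) := rfl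
      _ = μ {s | s w' ∈ A} * μ {s | s w ∈ ({x} : Set α)} :=
        h.measure_inter_preimage_eq_mul A {x} .of_discrete .of_discrete
      _ = ν A * ν {x} := by rw [measure_pi_eval_preimage, measure_pi_eval_preimage]
  calc μ ({s | testDecode A d s ≠ w} ∩ {s | s w = x})
      ≤ μ (⋃ w' ∈ univ.erase w, {s | s w' ∈ A} ∩ {s | s w = x}) :=
        measure_mono (testDecode_ne_inter_subset d w hx)
    _ ≤ ∑ w' ∈ univ.erase w, μ ({s | s w' ∈ A} ∩ {s | s w = x}) := measure_biUnion_finset_le _ _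
    _ = ∑ w' ∈ univ.erase w, ν A * ν {x} :=
        sum_congr rfl fun w' hw' => hindep w' (ne_of_mem_erase hw')
    _ ≤ M * (ν A * ν {x}) := by
        rw [sum_const, nsmul_eq_mul]
        gcongr
        exact_mod_cast (card_erase_le).trans_eq (card_fin M)

end RandomCodebook

section CodewordLaw

variable {β 𝒳 : Type*} [Fintype β] [Fintype 𝒳] {Q : 𝒳 → ℝ}

lemma sum_ofReal_comp_eq_one (e : β ≃ 𝒳) (hQ0 : ∀ a, 0 ≤ Q a) (hQ1 : ∑ a, Q a = 1) :
    ∑ b, ENNReal.ofReal (Q (e b)) = 1 := by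
  rw [← ENNReal.ofReal_sum_of_nonneg fun b _ => hQ0 _, e.sum_comp Q, hQ1, ENNReal.ofReal_one]

variable [MeasurableSpace β] [DiscreteMeasurableSpace β]

noncomputable def codewordLaw (e : β ≃ 𝒳) (hQ0 : ∀ a, 0 ≤ Q a) (hQ1 : ∑ a, Q a = 1) (n : ℕ) :
    Measure (Fin n → β) :=
  Measure.pi fun _ => (PMF.ofFintype _ (sum_ofReal_comp_eq_one e hQ0 hQ1)).toMeasure

variable (e : β ≃ 𝒳) (hQ0 : ∀ a, 0 ≤ Q a) (hQ1 : ∑ a, Q a = 1) (n : ℕ)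

instance : IsProbabilityMeasure (codewordLaw e hQ0 hQ1 n) := by
  unfold codewordLaw; infer_instance

lemma codewordLaw_singleton (c : Fin n → β) :
    codewordLaw e hQ0 hQ1 n {c} = ENNReal.ofReal (∏ i, Q (e (c i))) := by
  rw [codewordLaw, Measure.pi_singleton, ENNReal.ofReal_prod_of_nonneg fun i _ => hQ0 _]
  exact prod_congr rfl fun i _ => PMF.toMeasure_apply_singleton _ _ .of_discrete

lemma codewordLaw_preimage (A : Finset (Fin n → 𝒳)) :
    codewordLaw e hQ0 hQ1 n (Equiv.piCongrRight (fun _ => e) ⁻¹' A) =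
      ENNReal.ofReal (∑ x ∈ A, ∏ i, Q (x i)) := by
  set E := Equiv.piCongrRight fun _ : Fin n => e
  have hpre : E ⁻¹' A = ↑(A.map E.symm.toEmbedding) := by
    rw [coe_map, Equiv.coe_toEmbedding, E.symm.image_eq_preimage_symm, E.symm_symm]
  rw [hpre, ← sum_measure_singleton, sum_map,
    ENNReal.ofReal_sum_of_nonneg fun x _ => prod_nonneg fun i _ => hQ0 _]
  refine sum_congr rfl fun x _ => ?_
  rw [Equiv.coe_toEmbedding, codewordLaw_singleton]
  simp [E]

end CodewordLaw

/-- Non-adaptive achievability for discrete individual channels: there is a block length `n`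
and a randomized rate-`R` encoder/decoder pair (with common randomness `S ∼ μ`) whose input
is i.i.d. `∼ Q` for every message, and whose conditional error probability, given any input
sequence `x` and output sequence `y` with `Î(x;y) > R + δ`, is at most `Pe`.  The error
probability given `(x,y)` is expressed as the `ℝ≥0∞`-ratio
`μ(decode ≠ w ∧ input = x) / μ(input = x)` (which is `0` when the conditioning event is
null). -/
theorem statement11 {𝒳 𝒴 : Type*} [Fintype 𝒳] [Fintype 𝒴] [DecidableEq 𝒳] [DecidableEq 𝒴]
    (Pe δ : ℝ) (hPe : 0 < Pe) (hδ : 0 < δ)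
    (Q : 𝒳 → ℝ) (hQ0 : ∀ a, 0 ≤ Q a) (hQ1 : ∑ a, Q a = 1)
    (R : ℝ) (hR : 0 < R) :
    ∃ n : ℕ, 0 < n ∧
    ∃ (S : Type) (_ : MeasurableSpace S) (μ : Measure S), IsProbabilityMeasure μ ∧
    ∃ (enc : Fin (Nat.ceil (Real.exp ((n : ℝ) * R))) → S → (Fin n → 𝒳))
      (dec : (Fin n → 𝒴) → S → Fin (Nat.ceil (Real.exp ((n : ℝ) * R)))),
      (∀ w (x : Fin n → 𝒳), μ {s | enc w s = x} = ENNReal.ofReal (∏ i, Q (x i))) ∧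
      (∀ w (x : Fin n → 𝒳) (y : Fin n → 𝒴), R + δ < empMI x y →
        μ ({s | dec y s ≠ w} ∩ {s | enc w s = x}) / μ {s | enc w s = x} ≤
          ENNReal.ofReal Pe) := by
  obtain ⟨n, hn, hrate⟩ := exists_ceil_exp_mul_exp_mul_pow_le (Fintype.card 𝒳 * Fintype.card 𝒴)
    hR.le hδ hPe
  set M := ⌈Real.exp (n * R)⌉₊
  -- `S` must live in `Type`, so codewords are words over `Fin |𝒳|`, transported to `𝒳` by `E`.
  set E := Equiv.piCongrRight fun _ : Fin n => (Fintype.equivFin 𝒳).symm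
  set ν := codewordLaw (Fintype.equivFin 𝒳).symm hQ0 hQ1 n
  set typical : (Fin n → 𝒴) → Finset (Fin n → 𝒳) := fun y => {x | R + δ < empMI x y}
  have henc : ∀ (w : Fin M) x, {s : Fin M → Fin n → Fin (Fintype.card 𝒳) | E (s w) = x} =
      {s | s w ∈ ({E.symm x} : Set _)} := fun w x => Set.ext fun s => E.eq_symm_apply.symm
  have hmarg : ∀ x, ν {E.symm x} = ENNReal.ofReal (∏ i, Q (x i)) := fun x => by
    simp [ν, E, codewordLaw_singleton]
  have htypical : ∀ y, (M : ℝ≥0∞) * ν (E ⁻¹' typical y) ≤ ENNReal.ofReal Pe := fun y => by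
    rw [codewordLaw_preimage, ← ENNReal.ofReal_natCast, ← ENNReal.ofReal_mul (Nat.cast_nonneg _)]
    refine ENNReal.ofReal_le_ofReal (le_trans ?_ hrate)
    gcongr
    exact sum_prod_of_lt_empMI_le hQ0 hQ1 y (R + δ)
  have hM : 0 < M := Nat.ceil_pos.mpr (Real.exp_pos _)
  refine ⟨n, hn, Fin M → Fin n → Fin (Fintype.card 𝒳), inferInstance, Measure.pi fun _ => ν,
    inferInstance, fun w s => E (s w), fun y => testDecode (E ⁻¹' typical y) ⟨0, hM⟩,
    fun w x => by rw [henc, measure_pi_eval_preimage, hmarg], fun w x y hxy => ?_⟩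
  rw [henc, measure_pi_eval_preimage, hmarg]
  refine ENNReal.div_le_of_le_mul ?_
  calc _ ≤ M * (ν (E ⁻¹' typical y) * ν {E.symm x}) :=
        measure_testDecode_ne_inter_le ν _ w (by simpa [typical] using hxy)
    _ ≤ ENNReal.ofReal Pe * ENNReal.ofReal (∏ i, Q (x i)) := by
        rw [← mul_assoc, hmarg]; gcongr; exact htypical y
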